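/- arXiv:2407.14074 — 2 statements merged into one kernel-verified Lean document; each statement's English description precedes it below -/
import Mathlib

section
/- Let π_1,...,π_K be positive reals summing to 1, and let g_1,...,g_K be square-integrable mean-zero random variables. Define the K×K matrix M with diagonal entries M_{kk} = ((1−π_k)/π_k)·E[g_k²] and off-diagonal entries M_{kℓ} = −E[g_k g_ℓ]. Then M is positive semidefinite. -/
/-!
Since `(1 - π k) / π k = 1 / π k - 1`, the matrix is `diag (E[g_k²] / π_k) - G` with
`G k l = E[g_k g_l]`, and its quadratic form at `x` is `∑ x_k² E[g_k²] / π_k - E[(∑ x_k g_k)²]`.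
This is nonnegative because, pointwise, Cauchy–Schwarz with the weights `π` (which sum to `1`)
gives `(∑ x_k g_k)² ≤ ∑ (x_k g_k)² / π_k`.
-/

open MeasureTheory Matrix Finset

section

variable {ι Ω : Type*}

lemma sq_sum_le_sum_sq_div_of_sum_eq_one [Fintype ι] {π : ι → ℝ} (hπ : ∀ k, 0 < π k)
    (hsum : ∑ k, π k = 1) (a : ι → ℝ) :
    (∑ k, a k) ^ 2 ≤ ∑ k, a k ^ 2 / π k := by
  simpa [hsum] using sq_sum_div_le_sum_sq_div univ a fun k _ => hπ k

variable [MeasurableSpace Ω] {μ : Measure Ω} {g : ι → Ω → ℝ}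

variable (μ g) in
noncomputable def secondMomentMatrix : Matrix ι ι ℝ :=
  Matrix.of fun k l => ∫ ω, g k ω * g l ω ∂μ

lemma secondMomentMatrix_isHermitian : (secondMomentMatrix μ g).IsHermitian := by
  ext k l
  simp only [conjTranspose_apply, star_trivial, secondMomentMatrix, of_apply, mul_comm]

variable [Fintype ι]

lemma dotProduct_secondMomentMatrix_mulVec (hg : ∀ k, MemLp (g k) 2 μ) (x : ι → ℝ) :
    x ⬝ᵥ secondMomentMatrix μ g *ᵥ x = ∫ ω, (∑ k, x k * g k ω) ^ 2 ∂μ := by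
  have hint : ∀ k l, Integrable (fun ω => x k * g k ω * (x l * g l ω)) μ := fun k l =>
    ((hg k).const_mul (x k)).integrable_mul ((hg l).const_mul (x l))
  calc x ⬝ᵥ secondMomentMatrix μ g *ᵥ x = ∑ k, ∑ l, ∫ ω, x k * g k ω * (x l * g l ω) ∂μ := by
        simp only [dotProduct, mulVec, secondMomentMatrix, of_apply, mul_sum]
        refine sum_congr rfl fun k _ => sum_congr rfl fun l _ => ?_
        rw [← integral_mul_const, ← integral_const_mul]
        congr 1 with ω
        ring
    _ = ∫ ω, (∑ k, x k * g k ω) ^ 2 ∂μ := by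
        simp_rw [sq, sum_mul_sum]
        rw [integral_finsetSum _ fun k _ => integrable_finsetSum _ fun l _ => hint k l]
        exact sum_congr rfl fun k _ => (integral_finsetSum _ fun l _ => hint k l).symm

lemma integral_sq_sum_le {π : ι → ℝ} (hπ : ∀ k, 0 < π k) (hsum : ∑ k, π k = 1)
    (hg : ∀ k, MemLp (g k) 2 μ) (x : ι → ℝ) :
    ∫ ω, (∑ k, x k * g k ω) ^ 2 ∂μ ≤ ∑ k, x k ^ 2 / π k * ∫ ω, g k ω ^ 2 ∂μ := by
  have hint : ∀ k, Integrable (fun ω => x k ^ 2 / π k * g k ω ^ 2) μ :=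
    fun k => (hg k).integrable_sq.const_mul _
  calc ∫ ω, (∑ k, x k * g k ω) ^ 2 ∂μ ≤ ∫ ω, ∑ k, x k ^ 2 / π k * g k ω ^ 2 ∂μ := by
        refine integral_mono_of_nonneg (ae_of_all _ fun ω => sq_nonneg _)
          (integrable_finsetSum _ fun k _ => hint k) (ae_of_all _ fun ω => ?_)
        simpa [mul_pow, mul_div_right_comm] using
          sq_sum_le_sum_sq_div_of_sum_eq_one hπ hsum fun k => x k * g k ω
    _ = ∑ k, x k ^ 2 / π k * ∫ ω, g k ω ^ 2 ∂μ := by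
        rw [integral_finsetSum _ fun k _ => hint k]
        simp_rw [integral_const_mul]

theorem posSemidef_diagonal_sub_secondMomentMatrix [DecidableEq ι] {π : ι → ℝ}
    (hπ : ∀ k, 0 < π k) (hsum : ∑ k, π k = 1) (hg : ∀ k, MemLp (g k) 2 μ) :
    (diagonal (fun k => (∫ ω, g k ω ^ 2 ∂μ) / π k) - secondMomentMatrix μ g).PosSemidef := by
  refine .of_dotProduct_mulVec_nonneg
    ((isHermitian_diagonal _).sub secondMomentMatrix_isHermitian) fun x => ?_
  have hdiag : x ⬝ᵥ diagonal (fun k => (∫ ω, g k ω ^ 2 ∂μ) / π k) *ᵥ x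
      = ∑ k, x k ^ 2 / π k * ∫ ω, g k ω ^ 2 ∂μ := by
    simp only [dotProduct, mulVec_diagonal]
    exact sum_congr rfl fun k _ => by ring
  simp only [star_trivial, sub_mulVec, dotProduct_sub, dotProduct_secondMomentMatrix_mulVec hg,
    hdiag, sub_nonneg]
  exact integral_sq_sum_le hπ hsum hg x

end

theorem stmt_8_general {Ω : Type*} [MeasurableSpace Ω] (μ : Measure Ω)
    (K : ℕ) (g : Fin K → Ω → ℝ)
    (hg : ∀ k, MemLp (g k) 2 μ)
    (π : Fin K → ℝ) (hπ : ∀ k, 0 < π k) (hsum : ∑ k, π k = 1) :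
    (Matrix.of fun k ℓ : Fin K =>
      if k = ℓ then ((1 - π k) / π k) * ∫ ω, (g k ω) ^ 2 ∂μ
      else -∫ ω, g k ω * g ℓ ω ∂μ).PosSemidef := by
  convert posSemidef_diagonal_sub_secondMomentMatrix hπ hsum hg using 1
  ext k l
  rcases eq_or_ne k l with rfl | hkl
  · simp only [of_apply, ↓reduceIte, secondMomentMatrix, Matrix.sub_apply, diagonal_apply_eq, ← sq]
    field_simp [(hπ k).ne']
  · simp [secondMomentMatrix, hkl]

theorem stmt_8 {Ω : Type*} [MeasurableSpace Ω] (μ : Measure Ω) [IsProbabilityMeasure μ]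
    (K : ℕ) (hK : 0 < K) (g : Fin K → Ω → ℝ)
    (hg : ∀ k, MemLp (g k) 2 μ) (hmean : ∀ k, ∫ ω, g k ω ∂μ = 0)
    (π : Fin K → ℝ) (hπ : ∀ k, 0 < π k) (hsum : ∑ k, π k = 1) :
    (Matrix.of fun k ℓ : Fin K =>
      if k = ℓ then ((1 - π k) / π k) * ∫ ω, (g k ω) ^ 2 ∂μ
      else -∫ ω, g k ω * g ℓ ω ∂μ).PosSemidef :=
  stmt_8_general μ K g hg π hπ hsum
end

section
/- Let g_1, g_2 be square-integrable random variables and π_1, π_2 > 0. If Var(g_1·π_2 − g_2·π_1) > 0 and similarly for all scalar combinations (i.e., g_1 and g_2 are not almost-surely linearly dependent), then for every nonzero (v_1, v_2) ∈ ℝ², v_1² Var(g_1)/π_1 + v_2² Var(g_2)/π_2 > Var(v_1 g_1 + v_2 g_2) whenever π_1 + π_2 ≤ 1. -/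
open MeasureTheory

/-!
Write `X = v₁ g₁`, `Y = v₂ g₂`. Expanding both sides in `Var X`, `Var Y` and `cov[X, Y]` gives
`Var X / π₁ + Var Y / π₂ - Var (X + Y)
  = Var (π₂ X - π₁ Y) / (π₁ π₂ (π₁ + π₂)) + (1 / (π₁ + π₂) - 1) Var (X + Y)`,
a quantitative Cauchy–Schwarz inequality `(a + b)² ≤ (a² / π₁ + b² / π₂)(π₁ + π₂)`.
The second term is nonnegative because `π₁ + π₂ ≤ 1`, and the first is positive because
`π₂ v₁ g₁ - π₁ v₂ g₂` is a nontrivial combination of `g₁` and `g₂`.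
-/

namespace ProbabilityTheory

variable {Ω : Type*} [MeasurableSpace Ω] {μ : Measure Ω}

lemma variance_eq_integral_sq_sub [IsProbabilityMeasure μ] {X : Ω → ℝ} (hX : MemLp X 2 μ) :
    Var[X; μ] = (∫ ω, X ω ^ 2 ∂μ) - (∫ ω, X ω ∂μ) ^ 2 :=
  variance_eq_sub hX

lemma variance_add_lt_div_add_div [IsFiniteMeasure μ] {X Y : Ω → ℝ}
    (hX : MemLp X 2 μ) (hY : MemLp Y 2 μ) {p q : ℝ} (hp : 0 < p) (hq : 0 < q) (hpq : p + q ≤ 1)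
    (hpos : 0 < Var[fun ω ↦ q * X ω - p * Y ω; μ]) :
    Var[fun ω ↦ X ω + Y ω; μ] < Var[X; μ] / p + Var[Y; μ] / q := by
  have hsum := variance_fun_add hX hY
  have hdiff : Var[fun ω ↦ q * X ω - p * Y ω; μ]
      = q ^ 2 * Var[X; μ] - 2 * (q * p) * cov[X, Y; μ] + p ^ 2 * Var[Y; μ] := by
    rw [variance_fun_sub (hX.const_mul q) (hY.const_mul p), variance_const_mul,
      variance_const_mul, covariance_const_mul_left, covariance_const_mul_right]
    ring
  have hgap : Var[X; μ] / p + Var[Y; μ] / q - Var[fun ω ↦ X ω + Y ω; μ]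
      = Var[fun ω ↦ q * X ω - p * Y ω; μ] / (p * q * (p + q))
        + (1 / (p + q) - 1) * Var[fun ω ↦ X ω + Y ω; μ] := by
    rw [hsum, hdiff]
    field_simp
    ring
  have hscale : 0 ≤ 1 / (p + q) - 1 := by
    rw [sub_nonneg, le_div_iff₀ (by positivity)]
    linarith
  have hgap_pos : 0 < Var[fun ω ↦ q * X ω - p * Y ω; μ] / (p * q * (p + q))
      + (1 / (p + q) - 1) * Var[fun ω ↦ X ω + Y ω; μ] := by
    have := variance_nonneg (fun ω ↦ X ω + Y ω) μ
    positivity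
  linarith

lemma variance_linear_combination_pos {X Y : Ω → ℝ}
    (hXY : ∀ r : ℝ, 0 < Var[fun ω ↦ X ω - r * Y ω; μ]) (hY : 0 < Var[Y; μ])
    {a b : ℝ} (hab : (a, b) ≠ (0, 0)) :
    0 < Var[fun ω ↦ a * X ω + b * Y ω; μ] := by
  rcases eq_or_ne a 0 with rfl | ha
  · have hb : b ≠ 0 := by rintro rfl; exact hab rfl
    simp only [zero_mul, zero_add, variance_const_mul]
    positivity
  · have hfactor : (fun ω ↦ a * X ω + b * Y ω) = fun ω ↦ a * (X ω - (-b / a) * Y ω) := by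
      funext ω
      field_simp
      ring
    rw [hfactor, variance_const_mul]
    exact mul_pos (by positivity) (hXY _)

end ProbabilityTheory

open ProbabilityTheory in
theorem stmt_19_general {Ω : Type*} [MeasurableSpace Ω] (μ : Measure Ω) [IsProbabilityMeasure μ]
    (g₁ g₂ : Ω → ℝ) (hg₁ : MemLp g₁ 2 μ) (hg₂ : MemLp g₂ 2 μ)
    (π₁ π₂ : ℝ) (hπ₁ : 0 < π₁) (hπ₂ : 0 < π₂) (hπsum : π₁ + π₂ ≤ 1)
    (hdep : ∀ r : ℝ, 0 < (∫ ω, (g₁ ω - r * g₂ ω) ^ 2 ∂μ)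
      - (∫ ω, (g₁ ω - r * g₂ ω) ∂μ) ^ 2)
    (hvar₂ : 0 < (∫ ω, (g₂ ω) ^ 2 ∂μ) - (∫ ω, g₂ ω ∂μ) ^ 2) :
    ∀ v₁ v₂ : ℝ, (v₁, v₂) ≠ (0, 0) →
      ((∫ ω, (v₁ * g₁ ω + v₂ * g₂ ω) ^ 2 ∂μ)
          - (∫ ω, (v₁ * g₁ ω + v₂ * g₂ ω) ∂μ) ^ 2)
        < v₁ ^ 2 * ((∫ ω, (g₁ ω) ^ 2 ∂μ) - (∫ ω, g₁ ω ∂μ) ^ 2) / π₁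
          + v₂ ^ 2 * ((∫ ω, (g₂ ω) ^ 2 ∂μ) - (∫ ω, g₂ ω ∂μ) ^ 2) / π₂ := by
  intro v₁ v₂ hv
  have hdep' (r : ℝ) : 0 < Var[fun ω ↦ g₁ ω - r * g₂ ω; μ] := by
    rw [variance_eq_integral_sq_sub (X := fun ω ↦ g₁ ω - r * g₂ ω) (hg₁.sub (hg₂.const_mul r))]
    exact hdep r
  have hvar₂' : 0 < Var[g₂; μ] := by rwa [variance_eq_integral_sq_sub hg₂]
  have hpos : 0 < Var[fun ω ↦ π₂ * (v₁ * g₁ ω) - π₁ * (v₂ * g₂ ω); μ] := by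
    have hv' : (π₂ * v₁, -(π₁ * v₂)) ≠ (0, 0) := by
      intro h
      simp only [Prod.mk.injEq, neg_eq_zero, mul_eq_zero, hπ₁.ne', hπ₂.ne', false_or] at h
      exact hv (Prod.ext h.1 h.2)
    convert variance_linear_combination_pos hdep' hvar₂' hv' using 3 with ω
    ring
  have key := variance_add_lt_div_add_div (hg₁.const_mul v₁) (hg₂.const_mul v₂) hπ₁ hπ₂ hπsum hpos
  rwa [variance_const_mul, variance_const_mul, variance_eq_integral_sq_sub hg₁,
    variance_eq_integral_sq_sub hg₂,
    variance_eq_integral_sq_sub (X := fun ω ↦ v₁ * g₁ ω + v₂ * g₂ ω)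
      ((hg₁.const_mul v₁).add (hg₂.const_mul v₂))] at key

theorem stmt_19 {Ω : Type*} [MeasurableSpace Ω] (μ : Measure Ω) [IsProbabilityMeasure μ]
    (g₁ g₂ : Ω → ℝ) (hg₁ : MemLp g₁ 2 μ) (hg₂ : MemLp g₂ 2 μ)
    (hmean₁ : ∫ ω, g₁ ω ∂μ = 0) (hmean₂ : ∫ ω, g₂ ω ∂μ = 0)
    (π₁ π₂ : ℝ) (hπ₁ : 0 < π₁) (hπ₂ : 0 < π₂) (hπsum : π₁ + π₂ ≤ 1)
    (hdep : ∀ r : ℝ, 0 < (∫ ω, (g₁ ω - r * g₂ ω) ^ 2 ∂μ)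
      - (∫ ω, (g₁ ω - r * g₂ ω) ∂μ) ^ 2)
    (hvar₂ : 0 < (∫ ω, (g₂ ω) ^ 2 ∂μ) - (∫ ω, g₂ ω ∂μ) ^ 2) :
    ∀ v₁ v₂ : ℝ, (v₁, v₂) ≠ (0, 0) →
      ((∫ ω, (v₁ * g₁ ω + v₂ * g₂ ω) ^ 2 ∂μ)
          - (∫ ω, (v₁ * g₁ ω + v₂ * g₂ ω) ∂μ) ^ 2)
        < v₁ ^ 2 * ((∫ ω, (g₁ ω) ^ 2 ∂μ) - (∫ ω, g₁ ω ∂μ) ^ 2) / π₁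
          + v₂ ^ 2 * ((∫ ω, (g₂ ω) ^ 2 ∂μ) - (∫ ω, g₂ ω ∂μ) ^ 2) / π₂ :=
  stmt_19_general μ g₁ g₂ hg₁ hg₂ π₁ π₂ hπ₁ hπ₂ hπsum hdep hvar₂
end
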